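/- arXiv:1602.02302 — 6 statements merged into one kernel-verified Lean document; each statement's English description precedes it below -/
import Mathlib

section
/- Let r ≥ 3 and let G = (V,E) be a maximal K_r-free graph. If u and v are two distinct non-adjacent vertices of G, then the number of common neighbours of u and v satisfies |N(u) ∩ N(v)| ≥ r·δ(G) − (r−2)·|V| (as an inequality of integers, or equivalently of reals). -/
/-!
Adding the non-edge `uv` creates an `r`-clique `s` containing `u` and `v`, so `s \ {u}` and
`s \ {v}` are `(r-1)`-cliques of `G`. As `G` is `K_r`-free, every vertex has a non-neighbour in
each of them: it has at most `r - 1` neighbours in `s`, and at most `r - 2` unless it is a common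
neighbour of `u` and `v`. Counting the edges between `s` and `V` from both sides gives
`r δ(G) ≤ ∑_{t ∈ s} deg t ≤ (r - 2) |V| + |N(u) ∩ N(v)|`.
-/

open Finset

namespace SimpleGraph

variable {V : Type*} {G : SimpleGraph V}

theorem sum_degree_eq_sum_card_neighborFinset_inter [Fintype V] [DecidableEq V]
    [DecidableRel G.Adj] (s : Finset V) :
    ∑ t ∈ s, G.degree t = ∑ x, #(G.neighborFinset x ∩ s) := by
  have hbelow (x : V) : s.bipartiteBelow G.Adj x = G.neighborFinset x ∩ s := by
    ext
    simp [G.adj_comm _ x, and_comm]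
  simp_rw [← hbelow, ← card_neighborFinset_eq_degree, neighborFinset_eq_filter (G := G)]
  exact sum_card_bipartiteAbove_eq_sum_card_bipartiteBelow G.Adj

variable [DecidableEq V] {n : ℕ} {s : Finset V} {u v : V}

theorem IsNClique.card_neighborFinset_inter_lt (hs : G.IsNClique n s) (hG : G.CliqueFree (n + 1))
    (x : V) [Fintype (G.neighborSet x)] :
    #(G.neighborFinset x ∩ s) < n := by
  obtain ⟨y, hy, hxy⟩ := hs.exists_not_adj_of_cliqueFree_succ hG x
  rw [← hs.card_eq]
  refine card_lt_card (ssubset_of_subset_of_ne inter_subset_right fun h ↦ hxy ?_)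
  have hy' : y ∈ G.neighborFinset x ∩ s := by rw [h]; exact hy
  exact (mem_neighborFinset G x y).mp (mem_inter.mp hy').1

theorem IsNClique.card_neighborFinset_inter_add_le [DecidableRel G.Adj]
    (hs : G.IsNClique n (s.erase u)) (hG : G.CliqueFree (n + 1)) (hu : u ∈ s)
    (x : V) [Fintype (G.neighborSet x)] :
    #(G.neighborFinset x ∩ s) + (if G.Adj x u then 1 else 2) ≤ #s := by
  have hlt := hs.card_neighborFinset_inter_lt hG x
  have hcard : #s = n + 1 := by rw [← hs.card_eq, card_erase_add_one hu]
  rw [inter_erase] at hlt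
  split_ifs with hxu
  · rw [card_erase_of_mem (by simpa [hu] using hxu)] at hlt
    omega
  · rw [erase_eq_of_notMem (by simpa [hu] using hxu)] at hlt
    omega

theorem CliqueFree.card_neighborFinset_inter_add_two_le [Fintype V] [DecidableRel G.Adj]
    (hG : G.CliqueFree n) (hs : (G ⊔ edge u v).IsNClique n s) (x : V) :
    #(G.neighborFinset x ∩ s) + 2 ≤
      n + if x ∈ G.neighborFinset u ∩ G.neighborFinset v then 1 else 0 := by
  have hus : u ∈ s := hG.mem_of_sup_edge_isNClique hs
  have hvs : v ∈ s := hG.mem_of_sup_edge_isNClique (edge_comm u v ▸ hs)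
  obtain ⟨m, rfl⟩ : ∃ m, n = m + 1 :=
    Nat.exists_eq_add_one.mpr (hs.card_eq ▸ card_pos.mpr ⟨u, hus⟩)
  have hu := (hs.erase_of_sup_edge_of_mem hus).card_neighborFinset_inter_add_le hG hus x
  have hv := ((edge_comm u v ▸ hs).erase_of_sup_edge_of_mem hvs).card_neighborFinset_inter_add_le
    hG hvs x
  rw [hs.card_eq] at hu hv
  by_cases hx : G.Adj x u ∧ G.Adj x v
  · rw [if_pos (by simpa [G.adj_comm _ x] using hx)]
    rw [if_pos hx.1] at hu
    omega
  · rw [if_neg (by simpa [G.adj_comm _ x] using hx)]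
    rcases not_and_or.mp hx with hxu | hxv
    · rw [if_neg hxu] at hu
      omega
    · rw [if_neg hxv] at hv
      omega

end SimpleGraph

theorem common_nbhd_of_nonadjacent_general (r : ℕ)
    (V : Type) [Fintype V] [DecidableEq V]
    (G : SimpleGraph V) [DecidableRel G.Adj]
    (hfree : G.CliqueFree r)
    (hmax : ∀ x y : V, x ≠ y → ¬ G.Adj x y →
      ¬ (G ⊔ SimpleGraph.edge x y).CliqueFree r)
    (u v : V) (huv : u ≠ v) (hnadj : ¬ G.Adj u v) :
    (r : ℝ) * G.minDegree - ((r : ℝ) - 2) * Fintype.card V ≤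
      ((G.neighborFinset u ∩ G.neighborFinset v).card : ℝ) := by
  set C := G.neighborFinset u ∩ G.neighborFinset v
  obtain ⟨s, hs⟩ := not_forall_not.mp (hmax u v huv hnadj)
  have hcount : r * G.minDegree + 2 * Fintype.card V ≤ r * Fintype.card V + #C :=
    calc r * G.minDegree + 2 * Fintype.card V
        ≤ ∑ t ∈ s, G.degree t + ∑ _x : V, 2 := by
          rw [← hs.card_eq, sum_const, card_univ, smul_eq_mul, mul_comm 2]
          gcongr
          exact card_nsmul_le_sum s _ _ fun t _ ↦ G.minDegree_le_degree t
      _ = ∑ x : V, (#(G.neighborFinset x ∩ s) + 2) := by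
          rw [SimpleGraph.sum_degree_eq_sum_card_neighborFinset_inter, sum_add_distrib]
      _ ≤ ∑ x : V, (r + if x ∈ C then 1 else 0) :=
          sum_le_sum fun x _ ↦ hfree.card_neighborFinset_inter_add_two_le hs x
      _ = r * Fintype.card V + #C := by
          rw [sum_add_distrib, sum_const, card_univ, smul_eq_mul, mul_comm, sum_boole]
          simp
  have hcount' := (Nat.cast_le (α := ℝ)).mpr hcount
  push_cast at hcount'
  linarith

/-- In a maximal `K_r`-free graph (`r ≥ 3`), any two distinct non-adjacent vertices `u`, `v`
satisfy `|N(u) ∩ N(v)| ≥ r·δ(G) − (r−2)·|V|`. -/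
theorem common_nbhd_of_nonadjacent (r : ℕ) (hr : 3 ≤ r)
    (V : Type) [Fintype V] [DecidableEq V]
    (G : SimpleGraph V) [DecidableRel G.Adj]
    (hfree : G.CliqueFree r)
    (hmax : ∀ x y : V, x ≠ y → ¬ G.Adj x y →
      ¬ (G ⊔ SimpleGraph.edge x y).CliqueFree r)
    (u v : V) (huv : u ≠ v) (hnadj : ¬ G.Adj u v) :
    (r : ℝ) * G.minDegree - ((r : ℝ) - 2) * Fintype.card V ≤
      ((G.neighborFinset u ∩ G.neighborFinset v).card : ℝ) :=
  common_nbhd_of_nonadjacent_general r V G hfree hmax u v huv hnadj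
end

section
/- Let r ≥ 3 and ε > 0, and let G = (V,E) be a maximal K_r-free graph with minimum degree δ(G) ≥ ((2r-5)/(2r-3) + ε)·|V|. If u and v are two distinct non-adjacent vertices of G and U ⊆ V satisfies |U| < ε·|V|, then the induced subgraph of G on (N(u) ∩ N(v)) \ U contains a clique on r−2 vertices. -/
/-!
Maximality at the non-edge `uv` yields an `(r-2)`-clique `T` joined to both `u` and `v`.
Every neighbour of `u` or `v` misses some vertex of `T` (otherwise there is a `K_r`), and each
vertex of `T` misses at most `n - δ` vertices, so `|N(u) ∪ N(v)| ≤ (r-2)(n-δ)` and hence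
`|N(u) ∩ N(v)| ≥ 2δ - (r-2)(n-δ)`. The degree bound makes this exceed `(r-3)(n-δ) + ε n`, so
even after removing `U` more than `(r-3)(n-δ)` common neighbours remain, and a greedy choice,
each step discarding at most `n - δ` candidates, finds an `(r-2)`-clique among them.
-/

open Finset

namespace SimpleGraph

variable {V : Type*} {G : SimpleGraph V}

lemma maximal_cliqueFree_of_forall_not_cliqueFree_sup_edge {n : ℕ} (hG : G.CliqueFree n)
    (h : ∀ x y, x ≠ y → ¬G.Adj x y → ¬(G ⊔ edge x y).CliqueFree n) :
    Maximal (fun H ↦ H.CliqueFree n) G := by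
  refine ⟨hG, fun H hH hGH x y hxy ↦ ?_⟩
  by_contra hn
  exact h x y hxy.ne hn (hH.anti (sup_le hGH ((edge_le_iff H).2 (Or.inr hxy))))

variable [Fintype V] [DecidableRel G.Adj]

lemma card_filter_not_adj_le (x : V) (W : Finset V) :
    #{y ∈ W | ¬G.Adj y x} ≤ Fintype.card V - G.minDegree := by
  classical
  calc #{y ∈ W | ¬G.Adj y x} ≤ #(G.neighborFinset x)ᶜ :=
        card_le_card fun y hy ↦ by simpa [adj_comm] using (mem_filter.1 hy).2
    _ = Fintype.card V - G.degree x := by rw [card_compl, card_neighborFinset_eq_degree]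
    _ ≤ Fintype.card V - G.minDegree := Nat.sub_le_sub_left (G.minDegree_le_degree x) _

lemma card_le_card_mul_of_forall_exists_not_adj {S T : Finset V}
    (h : ∀ x ∈ S, ∃ t ∈ T, ¬G.Adj x t) : #S ≤ #T * (Fintype.card V - G.minDegree) := by
  classical
  calc #S ≤ #(T.biUnion fun t ↦ {x ∈ univ | ¬G.Adj x t}) := card_le_card fun x hx ↦ by
        obtain ⟨t, ht, hxt⟩ := h x hx
        exact mem_biUnion.2 ⟨t, ht, by simpa using hxt⟩
    _ ≤ ∑ t ∈ T, #{x ∈ univ | ¬G.Adj x t} := card_biUnion_le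
    _ ≤ #T * (Fintype.card V - G.minDegree) := by
        rw [← smul_eq_mul]
        exact sum_le_card_nsmul _ _ _ fun t _ ↦ card_filter_not_adj_le t univ

theorem exists_isNClique_subset_of_mul_lt_card (m : ℕ) (W : Finset V)
    (hW : m * (Fintype.card V - G.minDegree) < #W) : ∃ t ⊆ W, G.IsNClique (m + 1) t := by
  classical
  induction m generalizing W with
  | zero =>
    obtain ⟨x, hx⟩ := card_pos.1 (Nat.zero_lt_of_lt hW)
    exact ⟨{x}, singleton_subset_iff.2 hx, isNClique_singleton.2 rfl⟩
  | succ m ih =>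
    obtain ⟨x, hx⟩ := card_pos.1 (Nat.zero_lt_of_lt hW)
    have hsplit := card_filter_add_card_filter_not (s := W) (G.Adj · x)
    have hmiss := G.card_filter_not_adj_le x W
    have hnbrs : m * (Fintype.card V - G.minDegree) < #{y ∈ W | G.Adj y x} := by
      rw [add_one_mul] at hW
      omega
    obtain ⟨t, htW, ht⟩ := ih _ hnbrs
    refine ⟨insert x t, insert_subset hx (htW.trans (filter_subset _ _)),
      ht.insert fun y hy ↦ (mem_filter.1 (htW hy)).2.symm⟩

lemma two_mul_minDegree_le_card_inter_add [DecidableEq V] {n : ℕ}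
    (hG : Maximal (fun H ↦ H.CliqueFree (n + 2)) G) {u v : V} (huv : u ≠ v)
    (hnadj : ¬G.Adj u v) :
    2 * G.minDegree ≤
      #(G.neighborFinset u ∩ G.neighborFinset v) + n * (Fintype.card V - G.minDegree) := by
  obtain ⟨s, hus, hvs, hu, hv⟩ := exists_of_maximal_cliqueFree_not_adj hG huv hnadj
  have hs : #s = n := by simpa [card_insert_of_notMem hus] using hu.card_eq
  have hmiss : ∀ w x, G.IsNClique (n + 1) (insert w s) → G.Adj w x →
      ∃ t ∈ s, ¬G.Adj x t := by
    intro w x hw hwx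
    obtain ⟨t, ht, hxt⟩ := hw.exists_not_adj_of_cliqueFree_succ hG.1 x
    rcases mem_insert.1 ht with rfl | ht
    · exact absurd hwx.symm hxt
    · exact ⟨t, ht, hxt⟩
  have hunion : #(G.neighborFinset u ∪ G.neighborFinset v) ≤
      n * (Fintype.card V - G.minDegree) := by
    rw [← hs]
    refine card_le_card_mul_of_forall_exists_not_adj fun x hx ↦ ?_
    rcases mem_union.1 hx with hx | hx
    · exact hmiss u x hu ((mem_neighborFinset _ _ _).1 hx)
    · exact hmiss v x hv ((mem_neighborFinset _ _ _).1 hx)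
  have hsum := card_inter_add_card_union (G.neighborFinset u) (G.neighborFinset v)
  rw [card_neighborFinset_eq_degree, card_neighborFinset_eq_degree] at hsum
  have := G.minDegree_le_degree u
  have := G.minDegree_le_degree v
  omega

end SimpleGraph

lemma mul_sub_lt_sub_of_div_add_mul_le {r ε n δ i c : ℝ} (hr : 3 ≤ r) (hε : 0 ≤ ε)
    (hn : 0 ≤ n) (hδ : ((2 * r - 5) / (2 * r - 3) + ε) * n ≤ δ)
    (hi : 2 * δ ≤ i + (r - 2) * (n - δ)) (hc : c < ε * n) : (r - 3) * (n - δ) < i - c := by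
  have hpos : 0 < 2 * r - 3 := by linarith
  rw [div_add' _ _ _ hpos.ne', div_mul_eq_mul_div, div_le_iff₀ hpos] at hδ
  nlinarith [mul_nonneg hε hn]

open SimpleGraph

/-- In a maximal `K_r`-free graph with minimum degree at least `((2r-5)/(2r-3)+ε)|V|`,
for any two distinct non-adjacent vertices `u`, `v` and any set `U` with `|U| < ε|V|`,
the induced subgraph on `(N(u) ∩ N(v)) \ U` contains a clique on `r − 2` vertices. -/
theorem clique_in_common_nbhd_avoiding_set (r : ℕ) (hr : 3 ≤ r) (ε : ℝ) (hε : 0 < ε)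
    (V : Type) [Fintype V]
    (G : SimpleGraph V) [DecidableRel G.Adj]
    (hfree : G.CliqueFree r)
    (hmax : ∀ x y : V, x ≠ y → ¬ G.Adj x y →
      ¬ (G ⊔ SimpleGraph.edge x y).CliqueFree r)
    (hδ : ((2 * (r : ℝ) - 5) / (2 * (r : ℝ) - 3) + ε) * Fintype.card V ≤ G.minDegree)
    (u v : V) (huv : u ≠ v) (hnadj : ¬ G.Adj u v)
    (U : Set V) (hU : (U.ncard : ℝ) < ε * Fintype.card V) :
    ∃ t : Finset V, G.IsNClique (r - 2) t ∧
      ↑t ⊆ (G.neighborSet u ∩ G.neighborSet v) \ U := by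
  classical
  obtain ⟨k, rfl⟩ := Nat.exists_eq_add_of_le' hr
  have hcommon := two_mul_minDegree_le_card_inter_add (n := k + 1)
    (maximal_cliqueFree_of_forall_not_cliqueFree_sup_edge hfree hmax) huv hnadj
  set W := (G.neighborFinset u ∩ G.neighborFinset v) \ U.toFinset
  have hW : #(G.neighborFinset u ∩ G.neighborFinset v) ≤ #W + U.ncard := by
    rw [Set.ncard_eq_toFinset_card']
    exact card_le_card_sdiff_add_card
  have hδn : G.minDegree ≤ Fintype.card V :=
    (G.minDegree_le_degree u).trans (G.degree_lt_card_verts u).le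
  have hcommon' : 2 * (G.minDegree : ℝ) ≤ #(G.neighborFinset u ∩ G.neighborFinset v) +
      (((k + 3 : ℕ) : ℝ) - 2) * (Fintype.card V - G.minDegree) := by
    have h := (Nat.cast_le (α := ℝ)).2 hcommon
    push_cast [Nat.cast_sub hδn] at h ⊢
    linarith
  have hcount := mul_sub_lt_sub_of_div_add_mul_le (by push_cast; linarith) hε.le
    (Nat.cast_nonneg _) hδ hcommon' hU
  have hWcard : k * (Fintype.card V - G.minDegree) < #W := by
    have h := (Nat.cast_le (α := ℝ)).2 hW
    rw [← Nat.cast_lt (α := ℝ)]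
    push_cast [Nat.cast_sub hδn] at h hcount ⊢
    linarith
  obtain ⟨t, htW, ht⟩ := exists_isNClique_subset_of_mul_lt_card k W hWcard
  refine ⟨t, ht, fun x hx ↦ ?_⟩
  simpa [W] using htW hx
end

section
/- Let r ≥ 3 and ε > 0, and let G = (V,E) be a K_r-free graph with minimum degree δ(G) ≥ ((2r-5)/(2r-3) + ε)·|V|. If u and v are adjacent vertices of G, then their common neighbourhood satisfies |N(u) ∩ N(v)| < ((2r-6)/(2r-3) + ε)·|V|. -/
/-!
Every vertex misses at most `n - δ` vertices, so choosing a vertex of a set `S` and passing to its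
neighbours in `S` shrinks `S` by at most `n - δ`. Starting from `S = N(u) ∩ N(v)`, this greedy
procedure finds an `(r - 2)`-clique as soon as `(r - 3)(n - δ) < |N(u) ∩ N(v)|`, and with `u` and
`v` that would be a `K_r`. The degree bound gives `n - δ ≤ (2/(2r - 3) - ε) n`, which makes that
inequality hold whenever `|N(u) ∩ N(v)| ≥ ((2r - 6)/(2r - 3) + ε) n`.
-/

open Finset

namespace SimpleGraph

variable {V : Type*} [Fintype V] [DecidableEq V] (G : SimpleGraph V) [DecidableRel G.Adj]

lemma card_sdiff_neighborFinset_le_card_sub_minDegree (s : Finset V) (w : V) :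
    #(s \ G.neighborFinset w) ≤ Fintype.card V - G.minDegree :=
  calc #(s \ G.neighborFinset w) ≤ #(G.neighborFinset w)ᶜ :=
        card_le_card fun x hx => mem_compl.2 (mem_sdiff.1 hx).2
    _ = Fintype.card V - G.degree w := by rw [card_compl, card_neighborFinset_eq_degree]
    _ ≤ Fintype.card V - G.minDegree := Nat.sub_le_sub_left (G.minDegree_le_degree w) _

lemma exists_isNClique_of_card_sdiff_neighborFinset_le {d : ℕ} (k : ℕ) {s : Finset V}
    (hs : ∀ w ∈ s, #(s \ G.neighborFinset w) ≤ d) (hk : k * d < #s + d) :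
    ∃ t ⊆ s, G.IsNClique k t := by
  induction k generalizing s with
  | zero => exact ⟨∅, empty_subset _, isNClique_empty.2 rfl⟩
  | succ k ih =>
    rw [add_one_mul] at hk
    obtain ⟨w, hw⟩ : s.Nonempty := card_pos.1 (by omega)
    have hsub : s ∩ G.neighborFinset w ⊆ s := inter_subset_left
    have hsplit := card_inter_add_card_sdiff s (G.neighborFinset w)
    obtain ⟨t, hts, ht⟩ := ih
      (fun x hx => (card_le_card (sdiff_subset_sdiff hsub le_rfl)).trans (hs x (hsub hx)))
      (by have := hs w hw; omega)
    refine ⟨insert w t, insert_subset hw (hts.trans hsub), ht.insert fun b hb => ?_⟩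
    exact (G.mem_neighborFinset w b).1 (mem_inter.1 (hts hb)).2

variable {G} in
lemma IsNClique.insert_insert_of_subset_inter_neighborFinset {k : ℕ} {t : Finset V} {u v : V}
    (ht : G.IsNClique k t) (huv : G.Adj u v)
    (htuv : t ⊆ G.neighborFinset u ∩ G.neighborFinset v) :
    G.IsNClique (k + 2) (insert u (insert v t)) := by
  have hadj : ∀ b ∈ t, G.Adj u b ∧ G.Adj v b := fun b hb => by simpa using htuv hb
  refine (ht.insert fun b hb => (hadj b hb).2).insert ?_
  exact forall_mem_insert _ _ _ |>.2 ⟨huv, fun b hb => (hadj b hb).1⟩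

end SimpleGraph

lemma sub_three_mul_sub_lt {r ε n δ c : ℝ} (hr : 3 ≤ r) (hε : 0 < ε) (hn : 0 < n)
    (hδ : ((2 * r - 5) / (2 * r - 3) + ε) * n ≤ δ) (hc : ((2 * r - 6) / (2 * r - 3) + ε) * n ≤ c) :
    (r - 3) * (n - δ) < c := by
  have hpos : 0 < 2 * r - 3 := by linarith
  have hgap : n - δ ≤ (2 / (2 * r - 3) - ε) * n := by
    have : (2 * r - 5) / (2 * r - 3) = 1 - 2 / (2 * r - 3) := by field_simp; ring
    rw [this] at hδ
    linarith
  calc (r - 3) * (n - δ) ≤ (r - 3) * ((2 / (2 * r - 3) - ε) * n) :=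
        mul_le_mul_of_nonneg_left hgap (by linarith)
    _ = (2 * r - 6) / (2 * r - 3) * n - (r - 3) * ε * n := by field_simp; ring
    _ ≤ (2 * r - 6) / (2 * r - 3) * n := by
        have : 0 ≤ (r - 3) * ε * n := by positivity
        linarith
    _ < ((2 * r - 6) / (2 * r - 3) + ε) * n := by nlinarith
    _ ≤ c := hc

/-- In a `K_r`-free graph with minimum degree at least `((2r-5)/(2r-3)+ε)|V|`,
any two adjacent vertices `u`, `v` satisfy `|N(u) ∩ N(v)| < ((2r-6)/(2r-3)+ε)|V|`. -/
theorem common_nbhd_of_adjacent_small (r : ℕ) (hr : 3 ≤ r) (ε : ℝ) (hε : 0 < ε)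
    (V : Type) [Fintype V] [DecidableEq V]
    (G : SimpleGraph V) [DecidableRel G.Adj]
    (hfree : G.CliqueFree r)
    (hδ : ((2 * (r : ℝ) - 5) / (2 * (r : ℝ) - 3) + ε) * Fintype.card V ≤ G.minDegree)
    (u v : V) (hadj : G.Adj u v) :
    ((G.neighborFinset u ∩ G.neighborFinset v).card : ℝ) <
      ((2 * (r : ℝ) - 6) / (2 * (r : ℝ) - 3) + ε) * Fintype.card V := by
  by_contra! hW
  have hδn : G.minDegree ≤ Fintype.card V :=
    (G.minDegree_le_degree u).trans (G.degree_lt_card_verts u).le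
  have hgap : (r - 3) * (Fintype.card V - G.minDegree) <
      #(G.neighborFinset u ∩ G.neighborFinset v) := by
    have := sub_three_mul_sub_lt (by exact_mod_cast hr) hε
      (by exact_mod_cast Fintype.card_pos_iff.2 ⟨u⟩) hδ hW
    rw [← Nat.cast_lt (α := ℝ)]
    push_cast [Nat.cast_sub hr, Nat.cast_sub hδn]
    exact this
  obtain ⟨t, htW, ht⟩ := G.exists_isNClique_of_card_sdiff_neighborFinset_le (r - 2)
    (s := G.neighborFinset u ∩ G.neighborFinset v)
    (fun w _ => G.card_sdiff_neighborFinset_le_card_sub_minDegree _ w)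
    (by rw [show r - 2 = r - 3 + 1 by omega, add_one_mul]; omega)
  have hclique := ht.insert_insert_of_subset_inter_neighborFinset hadj htW
  rw [show r - 2 + 2 = r by omega] at hclique
  exact hfree _ hclique
end

section
/- Let r ≥ 3 and ε > 0, and let G = (V,E) be a maximal K_r-free graph with minimum degree δ(G) ≥ ((2r-5)/(2r-3) + ε)·|V|. Let U ⊆ V with |U| < ε·|V|, and let v, w be vertices having the same neighbourhood outside U, i.e. N(v) \ U = N(w) \ U. Then every vertex u ∉ {v,w} that is adjacent to v is also adjacent to w. -/
/-!
Since `u ∈ N(v) \ N(w)`, the vertex `u` lies in `U`, and maximality gives an `(r-2)`-clique `S`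
in the common neighbourhood of `u` and `w`; take one with as few non-neighbours of `v` as
possible. Every vertex misses at most `D = |V| - δ(G)` vertices, so the common neighbourhood `P`
of `S` minus one or two vertices has at least `|V| - (r-3)D` resp. `|V| - (r-4)D` elements.

If `v` misses at most one vertex `τ` of `S`, a vertex of `P` outside `U ∪ {v}` is adjacent to at
most one of `u, w, τ`: two of them would complete a `K_r` with `S` or with `S - τ + v`. If `v`
misses two vertices `τ₁, τ₂` of `S`, a vertex of `P` outside `U` is adjacent to at most two of
`u, w, τ₁, τ₂`: three would complete a `K_r`, or replace some `τᵢ` in `S` against the choice of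
`S`. Double counting the edges into `P` gives `2|V| ≤ 2|U| + (2r-3)D` in both cases, which the
bound on `δ(G)` and `|U| < ε|V|` forbid.
-/

open Finset SimpleGraph

namespace Finset

lemma sum_le_mul_card_add_mul_card {ι : Type*} [DecidableEq ι] {P W : Finset ι} {f : ι → ℕ}
    {a b : ℕ} (hf : ∀ x ∈ P, f x ≤ a + b) (hfW : ∀ x ∈ P, x ∉ W → f x ≤ a) :
    ∑ x ∈ P, f x ≤ a * #P + b * #W := by
  rw [← sum_filter_add_sum_filter_not P (· ∈ W)]
  calc ∑ x ∈ P with x ∈ W, f x + ∑ x ∈ P with x ∉ W, f x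
      ≤ ∑ x ∈ P with x ∈ W, (a + b) + ∑ x ∈ P with x ∉ W, a := by
        gcongr with x hx x hx
        · exact hf x (mem_filter.1 hx).1
        · exact hfW x (mem_filter.1 hx).1 (mem_filter.1 hx).2
    _ = a * #P + b * #{x ∈ P | x ∈ W} := by
        rw [sum_const, sum_const, smul_eq_mul, smul_eq_mul,
          ← card_filter_add_card_filter_not (s := P) (· ∈ W)]
        ring
    _ ≤ a * #P + b * #W := by
        gcongr
        exact fun x hx => (mem_filter.1 hx).2

lemma card_filter_insert_erase_lt {α : Type*} [DecidableEq α] {p : α → Prop} [DecidablePred p]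
    {S : Finset α} {x τ : α} (hx : ¬ p x) (hτ : τ ∈ S) (hpτ : p τ) :
    #{a ∈ insert x (S.erase τ) | p a} < #{a ∈ S | p a} := by
  rw [filter_insert, if_neg hx, filter_erase]
  exact card_erase_lt_of_mem (mem_filter.2 ⟨hτ, hpτ⟩)

lemma exists_mem_forall_mem_erase_of_card_filter_not_le_one {α : Type*} [DecidableEq α]
    {p : α → Prop} [DecidablePred p] {S : Finset α} (hS : S.Nonempty)
    (h : #{a ∈ S | ¬ p a} ≤ 1) : ∃ τ ∈ S, ∀ a ∈ S.erase τ, p a := by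
  rcases eq_empty_or_nonempty {a ∈ S | ¬ p a} with hF | ⟨τ, hτ⟩
  · obtain ⟨τ, hτ⟩ := hS
    refine ⟨τ, hτ, fun a ha => by_contra fun hpa => ?_⟩
    have : a ∈ ({a ∈ S | ¬ p a} : Finset α) := mem_filter.2 ⟨(mem_erase.1 ha).2, hpa⟩
    simp [hF] at this
  · refine ⟨τ, (mem_filter.1 hτ).1, fun a ha => by_contra fun hpa => (mem_erase.1 ha).1 ?_⟩
    exact card_le_one.1 h a (mem_filter.2 ⟨(mem_erase.1 ha).2, hpa⟩) τ hτ

end Finset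

namespace SimpleGraph

variable {V : Type*} {G : SimpleGraph V} {m : ℕ} {S : Finset V} {u v w : V}

lemma CliqueFree.not_adj_of_isNClique {p q : V} (hfree : G.CliqueFree (m + 2))
    (hS : G.IsNClique m S) (hp : ∀ a ∈ S, G.Adj p a) (hq : ∀ a ∈ S, G.Adj q a) :
    ¬ G.Adj p q := by
  classical
  intro hpq
  exact ((hS.insert hq).insert ((forall_mem_insert _ _ _).2 ⟨hpq, hp⟩)).not_cliqueFree hfree

lemma CliqueFree.exists_isNClique_subset_commonNeighbors (hfree : G.CliqueFree (m + 2))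
    (hne : u ≠ w) (hsup : ¬ (G ⊔ edge u w).CliqueFree (m + 2)) :
    ∃ S : Finset V, G.IsNClique m S ∧ ↑S ⊆ G.commonNeighbors u w := by
  classical
  obtain ⟨t, ht⟩ := not_forall_not.1 hsup
  have ht' : (G ⊔ edge w u).IsNClique (m + 2) t := edge_comm u w ▸ ht
  have hut := hfree.mem_of_sup_edge_isNClique ht
  have hwt := hfree.mem_of_sup_edge_isNClique ht'
  have htu := ht.erase_of_sup_edge_of_mem hut
  have htw := ht'.erase_of_sup_edge_of_mem hwt
  refine ⟨(t.erase u).erase w, htu.erase_of_mem (mem_erase_of_ne_of_mem hne.symm hwt), ?_⟩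
  intro a ha
  simp only [coe_erase, Set.mem_sdiff, Set.mem_singleton_iff, mem_coe] at ha
  obtain ⟨⟨hat, hau⟩, haw⟩ := ha
  exact ⟨htw.isClique (mem_erase_of_ne_of_mem hne hut) (mem_erase_of_ne_of_mem haw hat)
      (Ne.symm hau),
    htu.isClique (mem_erase_of_ne_of_mem hne.symm hwt) (mem_erase_of_ne_of_mem hau hat)
      (Ne.symm haw)⟩

variable [Fintype V] [DecidableRel G.Adj]

lemma two_mul_add_mul_sub_minDegree_lt_two_mul_card [Nonempty V] {r : ℕ} (hr : 3 ≤ r) {ε : ℝ}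
    (hδ : ((2 * (r : ℝ) - 5) / (2 * (r : ℝ) - 3) + ε) * Fintype.card V ≤ G.minDegree) {k : ℕ}
    (hk : (k : ℝ) < ε * Fintype.card V) :
    2 * k + (2 * r - 3) * (Fintype.card V - G.minDegree) < 2 * Fintype.card V := by
  have hδn : G.minDegree ≤ Fintype.card V := G.minDegree_lt_card.le
  have hr' : (3 : ℝ) ≤ r := by exact_mod_cast hr
  have hpos : (0 : ℝ) < 2 * r - 3 := by linarith
  have hdeg : (2 * r - 5) * (Fintype.card V : ℝ) + (2 * r - 3) * (ε * Fintype.card V)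
      ≤ (2 * r - 3) * G.minDegree := by
    have := mul_le_mul_of_nonneg_left hδ hpos.le
    rw [add_mul, mul_add, ← mul_assoc, mul_div_cancel₀ _ hpos.ne'] at this
    linarith
  have hεn : 2 * (k : ℝ) < (2 * r - 3) * (ε * Fintype.card V) := by
    nlinarith [(k.cast_nonneg : (0 : ℝ) ≤ k)]
  rw [← Nat.cast_lt (α := ℝ)]
  push_cast [Nat.cast_sub hδn, Nat.cast_sub (by omega : 3 ≤ 2 * r)]
  nlinarith

variable [DecidableEq V]

lemma card_compl_neighborFinset_le (c : V) :
    #(G.neighborFinset c)ᶜ ≤ Fintype.card V - G.minDegree := by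
  rw [card_compl, card_neighborFinset_eq_degree]
  exact Nat.sub_le_sub_left (G.minDegree_le_degree c) _

lemma card_le_card_filter_adj_add (P : Finset V) (c : V) :
    #P ≤ #{x ∈ P | G.Adj c x} + (Fintype.card V - G.minDegree) := by
  calc #P = #{x ∈ P | G.Adj c x} + #{x ∈ P | ¬ G.Adj c x} :=
        (card_filter_add_card_filter_not _).symm
    _ ≤ #{x ∈ P | G.Adj c x} + #(G.neighborFinset c)ᶜ := by
        gcongr
        intro x hx
        simpa using (mem_filter.1 hx).2
    _ ≤ _ := by gcongr; exact G.card_compl_neighborFinset_le c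

lemma card_le_card_filter_forall_adj_add (Q : Finset V) :
    Fintype.card V ≤ #{y | ∀ a ∈ Q, G.Adj a y} + #Q * (Fintype.card V - G.minDegree) := by
  calc Fintype.card V = #{y | ∀ a ∈ Q, G.Adj a y} + #{y | ¬ ∀ a ∈ Q, G.Adj a y} := by
        rw [card_filter_add_card_filter_not, card_univ]
    _ ≤ #{y | ∀ a ∈ Q, G.Adj a y} + #(Q.biUnion fun a => (G.neighborFinset a)ᶜ) := by
        gcongr
        intro y hy
        simpa using (mem_filter.1 hy).2
    _ ≤ #{y | ∀ a ∈ Q, G.Adj a y} + ∑ a ∈ Q, #(G.neighborFinset a)ᶜ := by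
        gcongr
        exact card_biUnion_le
    _ ≤ _ := by
        gcongr
        simpa using sum_le_card_nsmul Q _ _ fun a _ => G.card_compl_neighborFinset_le a

variable {U : Finset V}

lemma two_mul_card_le_of_forall_adj_erase (hfree : G.CliqueFree (m + 2))
    (hS : G.IsNClique m S) (hSuw : ↑S ⊆ G.commonNeighbors u w) (hu : u ∈ U) (huv : G.Adj u v)
    (hwv : ∀ x ∉ U, G.Adj w x → G.Adj v x) {τ : V} (hτ : τ ∈ S)
    (hv : ∀ a ∈ S.erase τ, G.Adj v a) :
    2 * Fintype.card V ≤ 2 * #U + (2 * m + 1) * (Fintype.card V - G.minDegree) := by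
  set Q := S.erase τ
  set P : Finset V := {y | ∀ a ∈ Q, G.Adj a y}
  have hQ : #Q + 1 = m := by rw [card_erase_add_one hτ, hS.card_eq]
  have hQv : G.IsNClique m (insert v Q) :=
    hQ ▸ IsNClique.insert ⟨hS.isClique.subset (by simp [Q]), rfl⟩ hv
  have hPQ : ∀ x ∈ P, ∀ a ∈ Q, G.Adj x a := fun x hx a ha => ((mem_filter.1 hx).2 a ha).symm
  have hPS : ∀ x ∈ P, G.Adj τ x → ∀ a ∈ S, G.Adj x a := by
    intro x hx hτx a ha
    rcases eq_or_ne a τ with rfl | haτ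
    · exact hτx.symm
    · exact hPQ x hx a (mem_erase.2 ⟨haτ, ha⟩)
  have hτu : ∀ x ∈ P, G.Adj τ x → ¬ G.Adj u x := fun x hx hτx =>
    hfree.not_adj_of_isNClique hS (fun a ha => (hSuw ha).1) (hPS x hx hτx)
  have hτw : ∀ x ∈ P, G.Adj τ x → ¬ G.Adj w x := fun x hx hτx =>
    hfree.not_adj_of_isNClique hS (fun a ha => (hSuw ha).2) (hPS x hx hτx)
  have hwu : ∀ x ∈ P, x ∉ insert v U → G.Adj w x → ¬ G.Adj u x := by
    intro x hx hxW hwx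
    rw [mem_insert, not_or] at hxW
    refine hfree.not_adj_of_isNClique hQv ?_ ?_
    · exact (forall_mem_insert _ _ _).2 ⟨huv, fun a ha => (hSuw (mem_of_mem_erase ha)).1⟩
    · exact (forall_mem_insert _ _ _).2 ⟨(hwv x hxW.2 hwx).symm, hPQ x hx⟩
  have hsum := sum_le_mul_card_add_mul_card (a := 1) (b := 1)
    (f := fun x => (if G.Adj u x then 1 else 0) + (if G.Adj w x then 1 else 0)
      + (if G.Adj τ x then 1 else 0))
    (fun x hx => by have := hτu x hx; have := hτw x hx; split_ifs <;> simp_all)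
    (fun x hx hxW => by
      have := hτu x hx; have := hτw x hx; have := hwu x hx hxW; split_ifs <;> simp_all)
  simp only [sum_add_distrib, ← card_filter] at hsum
  have hPu := card_le_card_filter_adj_add (G := G) P u
  have hPw := card_le_card_filter_adj_add (G := G) P w
  have hPτ := card_le_card_filter_adj_add (G := G) P τ
  have hP := card_le_card_filter_forall_adj_add (G := G) Q
  have hvU := card_insert_le v U
  have hU := card_pos.2 ⟨u, hu⟩
  subst hQ
  linarith

lemma two_mul_card_le_of_not_adj_pair (hfree : G.CliqueFree (m + 2))
    (hS : G.IsNClique m S) (hSuw : ↑S ⊆ G.commonNeighbors u w)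
    (hopt : ∀ x ∉ U, G.Adj u x → G.Adj w x → ∀ τ ∈ S, ¬ G.Adj v τ → ∃ a ∈ S.erase τ, ¬ G.Adj a x)
    {τ₁ τ₂ : V} (hτ₁ : τ₁ ∈ S) (hτ₂ : τ₂ ∈ S) (hne : τ₁ ≠ τ₂)
    (hvτ₁ : ¬ G.Adj v τ₁) (hvτ₂ : ¬ G.Adj v τ₂) :
    2 * Fintype.card V ≤ 2 * #U + 2 * m * (Fintype.card V - G.minDegree) := by
  set Q := (S.erase τ₁).erase τ₂
  set P : Finset V := {y | ∀ a ∈ Q, G.Adj a y}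
  have hQ : #Q + 2 = m := by
    rw [card_erase_of_mem (mem_erase.2 ⟨hne.symm, hτ₂⟩), card_erase_of_mem hτ₁, hS.card_eq]
    have := hS.card_eq ▸ one_lt_card.2 ⟨τ₁, hτ₁, τ₂, hτ₂, hne⟩
    omega
  have hPQ : ∀ x ∈ P, ∀ a ∈ S, a ≠ τ₁ → a ≠ τ₂ → G.Adj x a := fun x hx a ha h₁ h₂ =>
    ((mem_filter.1 hx).2 a (mem_erase.2 ⟨h₂, mem_erase.2 ⟨h₁, ha⟩⟩)).symm
  have hPS : ∀ x ∈ P, G.Adj τ₁ x → G.Adj τ₂ x → ∀ a ∈ S, G.Adj x a := by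
    intro x hx h₁ h₂ a ha
    rcases eq_or_ne a τ₁ with rfl | haτ₁
    · exact h₁.symm
    rcases eq_or_ne a τ₂ with rfl | haτ₂
    · exact h₂.symm
    exact hPQ x hx a ha haτ₁ haτ₂
  have hτu : ∀ x ∈ P, G.Adj τ₁ x → G.Adj τ₂ x → ¬ G.Adj u x := fun x hx h₁ h₂ =>
    hfree.not_adj_of_isNClique hS (fun a ha => (hSuw ha).1) (hPS x hx h₁ h₂)
  have hτw : ∀ x ∈ P, G.Adj τ₁ x → G.Adj τ₂ x → ¬ G.Adj w x := fun x hx h₁ h₂ =>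
    hfree.not_adj_of_isNClique hS (fun a ha => (hSuw ha).2) (hPS x hx h₁ h₂)
  have huwτ : ∀ x ∈ P, x ∉ U → G.Adj u x → G.Adj w x → ¬ G.Adj τ₁ x ∧ ¬ G.Adj τ₂ x := by
    intro x hx hxU hux hwx
    constructor
    · intro h₁
      obtain ⟨a, ha, hax⟩ := hopt x hxU hux hwx τ₂ hτ₂ hvτ₂
      obtain ⟨haτ₂, haS⟩ := mem_erase.1 ha
      rcases eq_or_ne a τ₁ with rfl | haτ₁
      exacts [hax h₁, hax (hPQ x hx a haS haτ₁ haτ₂).symm]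
    · intro h₂
      obtain ⟨a, ha, hax⟩ := hopt x hxU hux hwx τ₁ hτ₁ hvτ₁
      obtain ⟨haτ₁, haS⟩ := mem_erase.1 ha
      rcases eq_or_ne a τ₂ with rfl | haτ₂
      exacts [hax h₂, hax (hPQ x hx a haS haτ₁ haτ₂).symm]
  have hsum := sum_le_mul_card_add_mul_card (a := 2) (b := 2) (W := U)
    (f := fun x => (if G.Adj u x then 1 else 0) + (if G.Adj w x then 1 else 0)
      + (if G.Adj τ₁ x then 1 else 0) + (if G.Adj τ₂ x then 1 else 0))
    (fun x _ => by split_ifs <;> simp)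
    (fun x hx hxU => by
      have := hτu x hx; have := hτw x hx; have := huwτ x hx hxU; split_ifs <;> simp_all)
  simp only [sum_add_distrib, ← card_filter] at hsum
  have hPu := card_le_card_filter_adj_add (G := G) P u
  have hPw := card_le_card_filter_adj_add (G := G) P w
  have hPτ₁ := card_le_card_filter_adj_add (G := G) P τ₁
  have hPτ₂ := card_le_card_filter_adj_add (G := G) P τ₂
  have hP := card_le_card_filter_forall_adj_add (G := G) Q
  subst hQ
  linarith

theorem false_of_isNClique_subset_commonNeighbors (hfree : G.CliqueFree (m + 2)) (hm : 0 < m)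
    (hdense : 2 * #U + (2 * m + 1) * (Fintype.card V - G.minDegree) < 2 * Fintype.card V)
    (hu : u ∈ U) (huv : G.Adj u v) (hwv : ∀ x ∉ U, G.Adj w x → G.Adj v x)
    (hS : G.IsNClique m S) (hSuw : ↑S ⊆ G.commonNeighbors u w) : False := by
  induction hk : #{a ∈ S | ¬ G.Adj v a} using Nat.strong_induction_on generalizing S with
  | _ k ih =>
  rcases le_or_gt k 1 with hk1 | hk1
  · obtain ⟨τ, hτ, hv⟩ := exists_mem_forall_mem_erase_of_card_filter_not_le_one
      (card_pos.1 (hS.card_eq ▸ hm)) (hk ▸ hk1)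
    exact hdense.not_ge (two_mul_card_le_of_forall_adj_erase hfree hS hSuw hu huv hwv hτ hv)
  · obtain ⟨τ₁, h₁, τ₂, h₂, hne⟩ := one_lt_card.1 (hk ▸ hk1)
    rw [mem_filter] at h₁ h₂
    -- a vertex outside `U` joined to `u`, `w` and all of `S` but a non-neighbour `τ` of `v`
    -- replaces `τ` and decreases the number of non-neighbours of `v`
    have hopt : ∀ x ∉ U, G.Adj u x → G.Adj w x → ∀ τ ∈ S, ¬ G.Adj v τ →
        ∃ a ∈ S.erase τ, ¬ G.Adj a x := by
      intro x hxU hux hwx τ hτ hvτ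
      by_contra! hx
      refine ih _ (hk ▸ card_filter_insert_erase_lt (not_not.2 (hwv x hxU hwx)) hτ hvτ)
        (hS.insert_erase (fun a ha => (hx a (by simpa [and_comm] using ha)).symm) hτ) ?_ rfl
      rw [coe_insert, Set.insert_subset_iff]
      exact ⟨⟨hux, hwx⟩, (coe_subset.2 (erase_subset τ S)).trans hSuw⟩
    refine hdense.not_ge ((two_mul_card_le_of_not_adj_pair hfree hS hSuw hopt h₁.1 h₂.1 hne
      h₁.2 h₂.2).trans ?_)
    gcongr
    omega

end SimpleGraph

theorem adj_transfer_of_same_nbhd_outside_general (r : ℕ) (hr : 3 ≤ r) (ε : ℝ)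
    (V : Type) [Fintype V]
    (G : SimpleGraph V) [DecidableRel G.Adj]
    (hfree : G.CliqueFree r)
    (hmax : ∀ x y : V, x ≠ y → ¬ G.Adj x y →
      ¬ (G ⊔ SimpleGraph.edge x y).CliqueFree r)
    (hδ : ((2 * (r : ℝ) - 5) / (2 * (r : ℝ) - 3) + ε) * Fintype.card V ≤ G.minDegree)
    (U : Set V) (hU : (U.ncard : ℝ) < ε * Fintype.card V)
    (v w : V) (hvw : G.neighborSet v \ U = G.neighborSet w \ U) :
    ∀ u : V, u ≠ v → u ≠ w → G.Adj u v → G.Adj u w := by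
  classical
  intro u _ huw huv
  by_contra hnuw
  have hwv : ∀ x ∉ U.toFinset, G.Adj w x → G.Adj v x := fun x hx hwx =>
    (hvw ▸ ⟨hwx, by simpa using hx⟩ : x ∈ G.neighborSet v \ U).1
  have hu : u ∈ U.toFinset := by
    by_contra hu
    exact hnuw (hvw ▸ ⟨huv.symm, by simpa using hu⟩ : u ∈ G.neighborSet w \ U).1.symm
  have : Nonempty V := ⟨u⟩
  have hdense := two_mul_add_mul_sub_minDegree_lt_two_mul_card hr hδ (k := #U.toFinset)
    (Set.ncard_eq_toFinset_card' U ▸ hU)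
  obtain ⟨m, rfl⟩ : ∃ m, r = m + 2 := ⟨r - 2, by omega⟩
  rw [show 2 * (m + 2) - 3 = 2 * m + 1 by omega] at hdense
  obtain ⟨S, hS, hSuw⟩ := hfree.exists_isNClique_subset_commonNeighbors huw (hmax u w huw hnuw)
  exact false_of_isNClique_subset_commonNeighbors hfree (by omega) hdense hu huv hwv hS hSuw

/-- In a maximal `K_r`-free graph with minimum degree at least `((2r-5)/(2r-3)+ε)|V|`,
if `U` has size `|U| < ε|V|` and `v`, `w` have the same neighbourhood outside `U`, then
every vertex `u ∉ {v,w}` adjacent to `v` is also adjacent to `w`. -/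
theorem adj_transfer_of_same_nbhd_outside (r : ℕ) (hr : 3 ≤ r) (ε : ℝ) (hε : 0 < ε)
    (V : Type) [Fintype V]
    (G : SimpleGraph V) [DecidableRel G.Adj]
    (hfree : G.CliqueFree r)
    (hmax : ∀ x y : V, x ≠ y → ¬ G.Adj x y →
      ¬ (G ⊔ SimpleGraph.edge x y).CliqueFree r)
    (hδ : ((2 * (r : ℝ) - 5) / (2 * (r : ℝ) - 3) + ε) * Fintype.card V ≤ G.minDegree)
    (U : Set V) (hU : (U.ncard : ℝ) < ε * Fintype.card V)
    (v w : V) (hvw : G.neighborSet v \ U = G.neighborSet w \ U) :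
    ∀ u : V, u ≠ v → u ≠ w → G.Adj u v → G.Adj u w :=
  adj_transfer_of_same_nbhd_outside_general r hr ε V G hfree hmax hδ U hU v w hvw
end

section
/- Let r ≥ 3 and ε > 0, and let G = (V,E) be a K_r-free graph on n vertices with minimum degree δ(G) ≥ ((2r-5)/(2r-3) + ε)·n. Let U ⊆ V with |U| ≤ ε·n/4, and let u ≠ v be vertices having the same neighbourhood outside U, i.e. N(u) \ U = N(v) \ U. Then u and v are not adjacent in G. -/
/-!
Suppose `u ~ v`. Every neighbour of `u` outside `U` is a common neighbour of `u` and `v`, so the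
edge `uv` has at least `δ - |U|` common neighbours. Adding a common neighbour `w` to a clique loses
at most `n - deg w ≤ n - δ` common neighbours, so the clique `{u, v}` can be extended greedily
`r - 2` times as long as `(r - 3)(n - δ) < δ - |U|`, which is exactly what the degree condition
guarantees. This produces a `K_r`.
-/

open Finset

namespace SimpleGraph

variable {V : Type*} [Fintype V] (G : SimpleGraph V) [DecidableRel G.Adj]

def commonNeighborFinset (s : Finset V) : Finset V := {w | ∀ x ∈ s, G.Adj x w}

variable {G}

lemma mem_commonNeighborFinset {s : Finset V} {w : V} :
    w ∈ G.commonNeighborFinset s ↔ ∀ x ∈ s, G.Adj x w := by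
  simp [commonNeighborFinset]

lemma card_commonNeighborFinset_le_insert_add [DecidableEq V] (s : Finset V) (w : V) :
    #(G.commonNeighborFinset s) ≤
      #(G.commonNeighborFinset (insert w s)) + (Fintype.card V - G.minDegree) := by
  have hsub : G.commonNeighborFinset s ⊆
      G.commonNeighborFinset (insert w s) ∪ (G.neighborFinset w)ᶜ := by
    intro x hx
    by_cases hwx : G.Adj w x
    · refine mem_union_left _ (mem_commonNeighborFinset.2 fun y hy => ?_)
      rcases mem_insert.1 hy with rfl | hy
      exacts [hwx, mem_commonNeighborFinset.1 hx y hy]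
    · simp [hwx]
  calc #(G.commonNeighborFinset s)
        ≤ #(G.commonNeighborFinset (insert w s)) + #(G.neighborFinset w)ᶜ :=
        (card_le_card hsub).trans (card_union_le _ _)
    _ ≤ #(G.commonNeighborFinset (insert w s)) + (Fintype.card V - G.minDegree) := by
        rw [card_compl, card_neighborFinset_eq_degree]
        have := G.minDegree_le_degree w
        omega

lemma IsNClique.exists_isNClique_add [DecidableEq V] {a : ℕ} {s : Finset V}
    (hs : G.IsNClique a s) (k : ℕ)
    (hk : k * (Fintype.card V - G.minDegree) < #(G.commonNeighborFinset s)) :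
    ∃ t, G.IsNClique (a + k + 1) t := by
  obtain ⟨w, hw⟩ := card_pos.1 (Nat.zero_lt_of_lt hk)
  have hws : G.IsNClique (a + 1) (insert w s) :=
    hs.insert fun x hx => (mem_commonNeighborFinset.1 hw x hx).symm
  cases k with
  | zero => exact ⟨_, hws⟩
  | succ k =>
    have hloss := card_commonNeighborFinset_le_insert_add (G := G) s w
    obtain ⟨t, ht⟩ := hws.exists_isNClique_add k (by rw [Nat.succ_mul] at hk; omega)
    exact ⟨t, by rwa [show a + (k + 1) + 1 = a + 1 + k + 1 by omega]⟩

lemma degree_le_card_commonNeighborFinset_pair_add_ncard [DecidableEq V] {u v : V} {U : Set V}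
    (hsame : G.neighborSet u \ U = G.neighborSet v \ U) :
    G.degree u ≤ #(G.commonNeighborFinset {u, v}) + U.ncard := by
  have hsub : G.neighborFinset u ⊆ G.commonNeighborFinset {u, v} ∪ U.toFinite.toFinset := by
    intro w hw
    by_cases hwU : w ∈ U
    · exact mem_union_right _ (U.toFinite.mem_toFinset.2 hwU)
    · have hvw : w ∈ G.neighborSet v \ U := hsame ▸ ⟨(G.mem_neighborFinset u w).1 hw, hwU⟩
      refine mem_union_left _ (mem_commonNeighborFinset.2 fun x hx => ?_)
      rcases mem_insert.1 hx with rfl | hx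
      · exact (G.mem_neighborFinset x w).1 hw
      · exact (mem_singleton.1 hx) ▸ hvw.1
  rw [← card_neighborFinset_eq_degree, Set.ncard_eq_toFinset_card U]
  exact (card_le_card hsub).trans (card_union_le _ _)

end SimpleGraph

-- The thresholds are tuned so that `(2r - 5)(r - 2) = (2r - 3)(r - 3) + 1`.
lemma sub_three_mul_sub_lt_sub_of_le {r ε n δ m : ℝ} (hr : 3 ≤ r) (hn : 0 < n) (hm : 0 ≤ m)
    (hδ : ((2 * r - 5) / (2 * r - 3) + ε) * n ≤ δ) (hmε : m ≤ ε * n / 4) :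
    (r - 3) * (n - δ) < δ - m := by
  rw [div_add' _ _ _ (by linarith), div_mul_eq_mul_div, div_le_iff₀ (by linarith)] at hδ
  have hεn : 0 ≤ ε * n := by linarith
  nlinarith [mul_le_mul_of_nonneg_left hδ (by linarith : (0 : ℝ) ≤ r - 2),
    mul_le_mul_of_nonneg_left hmε (by linarith : (0 : ℝ) ≤ 2 * r - 3),
    mul_nonneg hεn (by linarith : (0 : ℝ) ≤ r - 3)]

open SimpleGraph in
theorem nonadj_of_same_nbhd_outside_general (r : ℕ) (hr : 3 ≤ r) (ε : ℝ)
    (V : Type) [Fintype V]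
    (G : SimpleGraph V) [DecidableRel G.Adj]
    (hfree : G.CliqueFree r)
    (hδ : ((2 * (r : ℝ) - 5) / (2 * (r : ℝ) - 3) + ε) * Fintype.card V ≤ G.minDegree)
    (U : Set V) (hU : (U.ncard : ℝ) ≤ ε * Fintype.card V / 4)
    (u v : V)
    (hsame : G.neighborSet u \ U = G.neighborSet v \ U) :
    ¬ G.Adj u v := by
  classical
  intro hadj
  set n := Fintype.card V
  set δ := G.minDegree
  have hpair : G.IsNClique 2 {u, v} := by
    rw [isNClique_iff]
    exact ⟨by simpa [isClique_pair] using fun _ => hadj, card_pair hadj.ne⟩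
  have hδn : δ ≤ n := (G.minDegree_le_degree u).trans (G.degree_lt_card_verts u).le
  have hcommon := (G.minDegree_le_degree u).trans
    (degree_le_card_commonNeighborFinset_pair_add_ncard hsame)
  have hbudget := sub_three_mul_sub_lt_sub_of_le (by exact_mod_cast hr)
    (by exact_mod_cast Fintype.card_pos_iff.2 ⟨u⟩) (Nat.cast_nonneg _) hδ hU
  have hk : (r - 3) * (n - δ) < #(G.commonNeighborFinset {u, v}) := by
    have hcommonR : (δ : ℝ) ≤ #(G.commonNeighborFinset {u, v}) + U.ncard := by
      exact_mod_cast hcommon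
    rw [← Nat.cast_lt (α := ℝ)]
    push_cast [Nat.cast_sub hr, Nat.cast_sub hδn]
    linarith
  obtain ⟨t, ht⟩ := hpair.exists_isNClique_add (r - 3) hk
  exact hfree t (by rwa [show 2 + (r - 3) + 1 = r by omega] at ht)

/-- In a `K_r`-free graph on `n` vertices with minimum degree at least
`((2r-5)/(2r-3)+ε)·n`, if `U` has size `|U| ≤ εn/4` and the distinct vertices `u`, `v`
have the same neighbourhood outside `U`, then `u` and `v` are not adjacent. -/
theorem nonadj_of_same_nbhd_outside (r : ℕ) (hr : 3 ≤ r) (ε : ℝ) (hε : 0 < ε)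
    (V : Type) [Fintype V]
    (G : SimpleGraph V) [DecidableRel G.Adj]
    (hfree : G.CliqueFree r)
    (hδ : ((2 * (r : ℝ) - 5) / (2 * (r : ℝ) - 3) + ε) * Fintype.card V ≤ G.minDegree)
    (U : Set V) (hU : (U.ncard : ℝ) ≤ ε * Fintype.card V / 4)
    (u v : V) (huv : u ≠ v)
    (hsame : G.neighborSet u \ U = G.neighborSet v \ U) :
    ¬ G.Adj u v :=
  nonadj_of_same_nbhd_outside_general r hr ε V G hfree hδ U hU u v hsame
end

section
/- Let r ≥ 3, let ε > 0, and set m = ⌈4 ln(8/ε)/ε²⌉ + 1. Let G = (V,E) be a graph on n ≥ m vertices with minimum degree δ(G) ≥ ((2r-5)/(2r-3) + ε)·n. Then more than half of all m-element subsets X ⊆ V satisfy |U_X| ≤ ε·n/4, where U_X = { v ∈ V : |N(v) ∩ X| < ((2r-5)/(2r-3) + ε/2)·m }; that is, the number of m-element subsets X of V with |U_X| ≤ ε·n/4 is greater than (1/2)·C(n,m). -/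
/-!
For a fixed vertex `v`, the number `|N(v) ∩ X|` of neighbours in a uniformly random `m`-set `X`
is hypergeometric with mean at least `((2r-5)/(2r-3) + ε)·m`. Its exponential moment is at most
that of the corresponding binomial variable (induction on `m`, adding one element at a time and
using Chebyshev's sum inequality), so Hoeffding's lemma gives the Chernoff bound: `v ∈ U_X` for at
most a fraction `exp(-ε²m/2) < ε/8` of all `X`. Double counting makes the average of `|U_X|`
less than `εn/8`, and by Markov's inequality fewer than half of the sets have `|U_X| > εn/4`.
-/

open Finset Real

open ProbabilityTheory MeasureTheory in
theorem Real.one_sub_add_mul_exp_le {p : ℝ} (hp₀ : 0 ≤ p) (hp₁ : p ≤ 1) (s : ℝ) :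
    1 - p + p * exp s ≤ exp (p * s + s ^ 2 / 8) := by
  let μ : Measure Bool := Ber(true, false, ⟨p, hp₀, hp₁⟩)
  have hX := hasSubgaussianMGF_of_mem_Icc (μ := μ)
    (X := fun b : Bool => if b then (1 : ℝ) else 0) (a := 0) (b := 1) (by fun_prop)
    (ae_of_all _ fun b => by cases b <;> simp)
  have h := hX.mgf_le s
  norm_num [mgf, μ, integral_bernoulliMeasure] at h
  have e₁ : exp (p * s) * exp (s * (1 - p)) = exp s := by rw [← exp_add]; ring_nf
  have e₂ : exp (p * s) * exp (-(s * p)) = 1 := by rw [← exp_add]; ring_nf; exact exp_zero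
  calc 1 - p + p * exp s = exp (p * s) * (p * exp (s * (1 - p)) + (1 - p) * exp (-(s * p))) := by
        linear_combination (-p) * e₁ - (1 - p) * e₂
    _ ≤ exp (p * s) * exp (s ^ 2 / 8) := by gcongr; exact h.trans_eq (by ring_nf)
    _ = exp (p * s + s ^ 2 / 8) := (exp_add _ _).symm

namespace Finset

section PowersetCard

variable {α : Type*} [DecidableEq α]

theorem succ_nsmul_sum_powersetCard_succ {M : Type*} [AddCommMonoid M] (u : Finset α) (m : ℕ)
    (f : Finset α → M) :
    (m + 1) • ∑ X ∈ u.powersetCard (m + 1), f X =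
      ∑ Y ∈ u.powersetCard m, ∑ x ∈ u \ Y, f (insert x Y) := by
  calc (m + 1) • ∑ X ∈ u.powersetCard (m + 1), f X
      = ∑ X ∈ u.powersetCard (m + 1), ∑ _x ∈ X, f X := by
        rw [smul_sum]
        exact sum_congr rfl fun X hX => by rw [sum_const, (mem_powersetCard.1 hX).2]
    _ = ∑ Y ∈ u.powersetCard m, ∑ x ∈ u \ Y, f (insert x Y) := by
        rw [sum_sigma', sum_sigma']
        refine sum_nbij' (fun p => ⟨p.1.erase p.2, p.2⟩) (fun p => ⟨insert p.2 p.1, p.2⟩)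
          ?_ ?_ ?_ ?_ ?_
        all_goals rintro ⟨X, x⟩ hp
        all_goals simp only [mem_sigma, mem_powersetCard, mem_sdiff] at hp
        · simp only [mem_sigma, mem_powersetCard, mem_sdiff]
          refine ⟨⟨(erase_subset _ _).trans hp.1.1, ?_⟩, hp.1.1 hp.2, notMem_erase _ _⟩
          rw [card_erase_of_mem hp.2, hp.1.2, Nat.add_sub_cancel]
        · simp only [mem_sigma, mem_powersetCard]
          exact ⟨⟨insert_subset hp.2.1 hp.1.1, by rw [card_insert_of_notMem hp.2.2, hp.1.2]⟩,
            mem_insert_self _ _⟩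
        · simp [insert_erase hp.2]
        · simp [erase_insert hp.2.2]
        · simp [insert_erase hp.2]

theorem card_mul_sum_card_inter_powersetCard {u N : Finset α} (hN : N ⊆ u) (m : ℕ) :
    #u * ∑ Y ∈ u.powersetCard m, #(N ∩ Y) = m * #N * (#u).choose m := by
  cases m with
  | zero => simp
  | succ m =>
    have hcount : ∀ w ∈ N, #{Y ∈ u.powersetCard (m + 1) | w ∈ Y} = (#u - 1).choose m := by
      intro w hw
      simpa [singleton_subset_iff] using
        card_filter_powersetCard_subset {w} u (m + 1) (singleton_subset_iff.2 (hN hw)) (by simp)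
    rw [sum_card_inter hcount]
    generalize #u = n
    cases n with
    | zero => simp
    | succ n =>
      rw [Nat.add_sub_cancel, mul_left_comm, Nat.add_one_mul_choose_eq]
      ring

theorem card_mul_sum_card_sdiff_powersetCard {u N : Finset α} (hN : N ⊆ u) (m : ℕ) :
    #u * ∑ Y ∈ u.powersetCard m, #(N \ Y) = (#u - m) * #N * (#u).choose m := by
  have hsplit : ∑ Y ∈ u.powersetCard m, (#(N \ Y) + #(N ∩ Y)) = (#u).choose m * #N := by
    simp [card_sdiff_add_card_inter]
  rw [sum_add_distrib] at hsplit
  rw [Nat.sub_mul, Nat.sub_mul, ← card_mul_sum_card_inter_powersetCard hN m, mul_assoc,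
    mul_comm #N, ← hsplit, mul_add, Nat.add_sub_cancel]

theorem sum_pow_card_inter_insert {R : Type*} [CommRing R] {u N : Finset α} (hN : N ⊆ u)
    (Y : Finset α) (l : R) :
    ∑ x ∈ u \ Y, l ^ #(N ∩ insert x Y) =
      l ^ #(N ∩ Y) * (#(u \ Y) - (1 - l) * #(N \ Y)) := by
  have hterm : ∀ x ∈ u \ Y,
      l ^ #(N ∩ insert x Y) = l ^ #(N ∩ Y) * (1 - (1 - l) * if x ∈ N then 1 else 0) := by
    intro x hx
    by_cases hxN : x ∈ N
    · rw [inter_insert_of_mem hxN,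
        card_insert_of_notMem fun h => (mem_sdiff.1 hx).2 (mem_inter.1 h).2, pow_succ]
      simp [hxN]
    · simp [inter_insert_of_notMem hxN, hxN]
  have hfilter : {x ∈ u \ Y | x ∈ N} = N \ Y := by
    ext x
    simp only [mem_filter, mem_sdiff]
    exact ⟨fun h => ⟨h.2, h.1.2⟩, fun h => ⟨⟨hN h.1, h.2⟩, h.1⟩⟩
  rw [sum_congr rfl hterm, ← mul_sum, sum_sub_distrib, ← mul_sum, sum_boole, sum_const, hfilter,
    nsmul_one]

theorem card_mul_sum_pow_card_inter_powersetCard_succ_le {u N : Finset α} (hN : N ⊆ u) {l : ℝ}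
    (hl₀ : 0 ≤ l) (hl₁ : l ≤ 1) (m : ℕ) :
    #u * ((m + 1) * ∑ X ∈ u.powersetCard (m + 1), l ^ #(N ∩ X)) ≤
      (#u - m : ℕ) * (#u - (1 - l) * #N) * ∑ Y ∈ u.powersetCard m, l ^ #(N ∩ Y) := by
  rcases lt_or_ge #u m with hum | hmu
  · simp [powersetCard_eq_empty.2 hum, powersetCard_eq_empty.2 (hum.trans m.lt_succ_self)]
  set F := ∑ Y ∈ u.powersetCard m, l ^ #(N ∩ Y)
  set g : Finset α → ℝ := fun Y => #(N \ Y)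
  have hchoose : (0 : ℝ) < (#u).choose m := by exact_mod_cast Nat.choose_pos hmu
  have hmean :
      (#u : ℝ) * ∑ Y ∈ u.powersetCard m, g Y = (#u - m : ℕ) * #N * (#u).choose m := by
    simp only [g]
    exact_mod_cast card_mul_sum_card_sdiff_powersetCard hN m
  have hcheb : F * ∑ Y ∈ u.powersetCard m, g Y ≤
      (#u).choose m * ∑ Y ∈ u.powersetCard m, l ^ #(N ∩ Y) * g Y := by
    have hmono : MonovaryOn (fun Y => l ^ #(N ∩ Y)) g (u.powersetCard m) := by
      intro Y _ Z _ hYZ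
      have hY := card_sdiff_add_card_inter N Y
      have hZ := card_sdiff_add_card_inter N Z
      have : #(N \ Y) < #(N \ Z) := by simpa [g] using hYZ
      exact pow_le_pow_of_le_one hl₀ hl₁ (by omega)
    simpa using hmono.sum_mul_sum_le_card_mul_sum
  have hinsert : ∀ Y ∈ u.powersetCard m, ∑ x ∈ u \ Y, l ^ #(N ∩ insert x Y) =
      l ^ #(N ∩ Y) * ((#u - m : ℕ) - (1 - l) * g Y) := fun Y hY => by
    obtain ⟨hYu, hYm⟩ := mem_powersetCard.1 hY
    rw [sum_pow_card_inter_insert hN Y, card_sdiff_of_subset hYu, hYm]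
  have hcorr :
      (#u - m : ℕ) * #N * F ≤ #u * ∑ Y ∈ u.powersetCard m, l ^ #(N ∩ Y) * g Y := by
    refine le_of_mul_le_mul_left ?_ hchoose
    calc ((#u).choose m : ℝ) * ((#u - m : ℕ) * #N * F)
        = F * (#u * ∑ Y ∈ u.powersetCard m, g Y) := by rw [hmean]; ring
      _ ≤ #u * ((#u).choose m * ∑ Y ∈ u.powersetCard m, l ^ #(N ∩ Y) * g Y) := by
        rw [mul_left_comm]; exact mul_le_mul_of_nonneg_left hcheb (Nat.cast_nonneg _)
      _ = _ := mul_left_comm _ _ _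
  calc #u * ((m + 1) * ∑ X ∈ u.powersetCard (m + 1), l ^ #(N ∩ X))
      = #u * ((#u - m : ℕ) * F - (1 - l) * ∑ Y ∈ u.powersetCard m, l ^ #(N ∩ Y) * g Y) := by
        have h := succ_nsmul_sum_powersetCard_succ u m fun X => l ^ #(N ∩ X)
        rw [nsmul_eq_mul, Nat.cast_succ] at h
        rw [h, sum_congr rfl hinsert]
        simp only [F, mul_sum, ← sum_sub_distrib]
        exact sum_congr rfl fun _ _ => by ring
    _ ≤ (#u - m : ℕ) * (#u - (1 - l) * #N) * F := by
        linarith [mul_le_mul_of_nonneg_left hcorr (sub_nonneg.2 hl₁)]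

theorem card_pow_mul_sum_pow_card_inter_powersetCard_le {u N : Finset α} (hN : N ⊆ u) {l : ℝ}
    (hl₀ : 0 ≤ l) (hl₁ : l ≤ 1) (m : ℕ) :
    (#u : ℝ) ^ m * ∑ X ∈ u.powersetCard m, l ^ #(N ∩ X) ≤
      (#u).choose m * (#u - (1 - l) * #N) ^ m := by
  induction m with
  | zero => simp
  | succ m ih =>
    set q : ℝ := #u - (1 - l) * #N
    have hq : 0 ≤ q := by
      have : (#N : ℝ) ≤ #u := by exact_mod_cast card_le_card hN
      nlinarith
    have hchoose : ((#u).choose (m + 1) : ℝ) * (m + 1) = (#u).choose m * (#u - m : ℕ) := by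
      exact_mod_cast Nat.choose_succ_right_eq _ _
    refine le_of_mul_le_mul_left ?_ m.cast_add_one_pos
    calc ((m : ℝ) + 1) * (#u ^ (m + 1) * ∑ X ∈ u.powersetCard (m + 1), l ^ #(N ∩ X))
        = #u ^ m * (#u * ((m + 1) * ∑ X ∈ u.powersetCard (m + 1), l ^ #(N ∩ X))) := by ring
      _ ≤ #u ^ m * ((#u - m : ℕ) * q * ∑ Y ∈ u.powersetCard m, l ^ #(N ∩ Y)) :=
        mul_le_mul_of_nonneg_left
          (card_mul_sum_pow_card_inter_powersetCard_succ_le hN hl₀ hl₁ m) (by positivity)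
      _ = (#u - m : ℕ) * q * (#u ^ m * ∑ Y ∈ u.powersetCard m, l ^ #(N ∩ Y)) := by ring
      _ ≤ (#u - m : ℕ) * q * ((#u).choose m * q ^ m) :=
        mul_le_mul_of_nonneg_left ih (by positivity)
      _ = (m + 1) * ((#u).choose (m + 1) * q ^ (m + 1)) := by
        linear_combination (-(q ^ (m + 1))) * hchoose

theorem card_filter_card_inter_lt_le {u N : Finset α} (hN : N ⊆ u) {a t : ℝ} (ht : 0 ≤ t)
    (hdens : (a + t) * #u ≤ #N) (m : ℕ) :
    (#{X ∈ u.powersetCard m | (#(N ∩ X) : ℝ) < a * m} : ℝ) ≤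
      (#u).choose m * exp (-2 * t ^ 2 * m) := by
  rcases u.eq_empty_or_nonempty with rfl | hu
  · cases m <;> simp [filter_singleton]
  -- `s = 4t` minimises the Chernoff exponent `-s t + s² / 8` coming from Hoeffding's lemma.
  set l := exp (-(4 * t))
  set p : ℝ := #N / #u
  have hn : (0 : ℝ) < #u := by exact_mod_cast hu.card_pos
  have hp₀ : 0 ≤ p := by positivity
  have hp₁ : p ≤ 1 := div_le_one_of_le₀ (by exact_mod_cast card_le_card hN) hn.le
  have hap : a + t ≤ p := (le_div_iff₀ hn).2 hdens
  set S := ∑ X ∈ u.powersetCard m, l ^ #(N ∩ X)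
  set B := {X ∈ u.powersetCard m | (#(N ∩ X) : ℝ) < a * m}
  have hlow : #B * exp (-(4 * t) * (a * m)) ≤ S :=
    calc #B * exp (-(4 * t) * (a * m)) = ∑ _X ∈ B, exp (-(4 * t) * (a * m)) := by
          rw [sum_const, nsmul_eq_mul]
      _ ≤ ∑ X ∈ B, l ^ #(N ∩ X) := sum_le_sum fun X hX => by
          rw [← exp_nat_mul]
          exact exp_le_exp.2 (by nlinarith [(mem_filter.1 hX).2])
      _ ≤ S := sum_le_sum_of_subset_of_nonneg (filter_subset _ _) fun _ _ _ => by positivity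
  have hmgf : S ≤ (#u).choose m * (1 - p + p * l) ^ m := by
    have h := card_pow_mul_sum_pow_card_inter_powersetCard_le hN (exp_pos _).le
      (exp_le_one_iff.2 (by linarith : -(4 * t) ≤ 0)) m
    have hq : (#u : ℝ) - (1 - l) * #N = #u * (1 - p + p * l) := by
      simp only [p]; field_simp; ring
    rw [hq, mul_pow, mul_left_comm] at h
    exact le_of_mul_le_mul_left h (by positivity)
  have hpow : (1 - p + p * l) ^ m ≤ exp (m * (p * -(4 * t) + (-(4 * t)) ^ 2 / 8)) := by
    rw [exp_nat_mul]
    exact pow_le_pow_left₀ (by nlinarith [exp_pos (-(4 * t))])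
      (one_sub_add_mul_exp_le hp₀ hp₁ _) m
  calc (#B : ℝ) = #B * exp (-(4 * t) * (a * m)) * exp (4 * t * (a * m)) := by
        rw [mul_assoc, ← exp_add]; simp
    _ ≤ (#u).choose m * exp (m * (p * -(4 * t) + (-(4 * t)) ^ 2 / 8)) *
          exp (4 * t * (a * m)) := by
        refine mul_le_mul_of_nonneg_right ?_ (exp_pos _).le
        exact hlow.trans (hmgf.trans (mul_le_mul_of_nonneg_left hpow (by positivity)))
    _ = (#u).choose m * exp (m * (p * -(4 * t) + (-(4 * t)) ^ 2 / 8) + 4 * t * (a * m)) := by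
        rw [mul_assoc, ← exp_add]
    _ ≤ (#u).choose m * exp (-2 * t ^ 2 * m) := by
        gcongr
        nlinarith [mul_le_mul_of_nonneg_left hap (mul_nonneg ht m.cast_nonneg)]

end PowersetCard

theorem card_filter_lt_card_filter_mul_le {α β : Type*} [Fintype α] (A : Finset β)
    (R : α → β → Prop) [∀ v X, Decidable (R v X)] {B T : ℝ}
    (hB : ∀ v, (#{X ∈ A | R v X} : ℝ) ≤ B) :
    #{X ∈ A | T < #{v | R v X}} * T ≤ Fintype.card α * B := by
  have hdouble : ∑ X ∈ A, #{v | R v X} = ∑ v, #{X ∈ A | R v X} :=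
    sum_card_bipartiteAbove_eq_sum_card_bipartiteBelow (r := fun X v => R v X)
  calc #{X ∈ A | T < #{v | R v X}} * T = ∑ _X ∈ {X ∈ A | T < #{v | R v X}}, T := by
        rw [sum_const, nsmul_eq_mul]
    _ ≤ ∑ X ∈ {X ∈ A | T < #{v | R v X}}, (#{v | R v X} : ℝ) :=
        sum_le_sum fun X hX => (mem_filter.1 hX).2.le
    _ ≤ ∑ X ∈ A, (#{v | R v X} : ℝ) :=
        sum_le_sum_of_subset_of_nonneg (filter_subset _ _) fun _ _ _ => Nat.cast_nonneg _
    _ = ∑ v, (#{X ∈ A | R v X} : ℝ) := by exact_mod_cast hdouble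
    _ ≤ ∑ _v : α, B := sum_le_sum fun v _ => hB v
    _ = Fintype.card α * B := by rw [sum_const, card_univ, nsmul_eq_mul]

theorem half_card_lt_card_filter_card_filter_le {α β : Type*} [Fintype α] (A : Finset β)
    (R : α → β → Prop) [∀ v X, Decidable (R v X)] {B T : ℝ} (hT : 0 < T)
    (hB : ∀ v, (#{X ∈ A | R v X} : ℝ) ≤ B) (hBT : Fintype.card α * B < #A / 2 * T) :
    (#A : ℝ) / 2 < #{X ∈ A | (#{v | R v X} : ℝ) ≤ T} := by
  have hbad : (#{X ∈ A | T < #{v | R v X}} : ℝ) < #A / 2 :=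
    lt_of_mul_lt_mul_right ((card_filter_lt_card_filter_mul_le A R hB).trans_lt hBT) hT.le
  have hsplit := card_filter_add_card_filter_not (s := A) fun X => (#{v | R v X} : ℝ) ≤ T
  simp only [not_le] at hsplit
  have hsplit' :
      (#{X ∈ A | (#{v | R v X} : ℝ) ≤ T} : ℝ) + #{X ∈ A | T < #{v | R v X}} = #A := by
    exact_mod_cast hsplit
  linarith

end Finset

theorem SimpleGraph.ncard_neighborSet_inter {V : Type*} [DecidableEq V] (G : SimpleGraph V)
    (v : V) [Fintype (G.neighborSet v)] (X : Finset V) :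
    (G.neighborSet v ∩ ↑X).ncard = #(G.neighborFinset v ∩ X) := by
  rw [← coe_neighborFinset, ← coe_inter, Set.ncard_coe_finset]

theorem exp_neg_two_mul_half_sq_mul_lt {ε : ℝ} (hε : 0 < ε) {m : ℕ}
    (hm : 4 * log (8 / ε) / ε ^ 2 < m) : exp (-2 * (ε / 2) ^ 2 * m) < ε / 8 := by
  rw [div_lt_iff₀ (by positivity)] at hm
  calc exp (-2 * (ε / 2) ^ 2 * m) < exp (-log (8 / ε)) := by
        gcongr; nlinarith [sq_nonneg ε, (m.cast_nonneg : (0 : ℝ) ≤ m)]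
    _ = ε / 8 := by rw [exp_neg, exp_log (by positivity), inv_div]

theorem majority_of_sets_good_general (r : ℕ) (ε : ℝ) (hε : 0 < ε)
    (m : ℕ) (hm : m = ⌈4 * Real.log (8 / ε) / ε ^ 2⌉₊ + 1)
    (V : Type) [Fintype V] (hn : m ≤ Fintype.card V)
    (G : SimpleGraph V) [DecidableRel G.Adj]
    (hδ : ((2 * (r : ℝ) - 5) / (2 * (r : ℝ) - 3) + ε) * Fintype.card V ≤ G.minDegree) :
    (((Fintype.card V).choose m : ℝ) / 2) <
      (({X : Finset V | X.card = m ∧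
        (({v : V | ((G.neighborSet v ∩ ↑X).ncard : ℝ) <
            ((2 * (r : ℝ) - 5) / (2 * (r : ℝ) - 3) + ε / 2) * m}.ncard : ℝ)
          ≤ ε * Fintype.card V / 4)} : Set (Finset V)).ncard : ℝ) := by
  classical
  set c := (2 * (r : ℝ) - 5) / (2 * (r : ℝ) - 3)
  set n := Fintype.card V
  have hC : (0 : ℝ) < n.choose m := by exact_mod_cast Nat.choose_pos hn
  have hn₀ : (0 : ℝ) < n := by exact_mod_cast (Nat.succ_pos _).trans_le (hm ▸ hn)
  have hβ : exp (-2 * (ε / 2) ^ 2 * m) < ε / 8 := exp_neg_two_mul_half_sq_mul_lt hε <| by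
    rw [hm]; push_cast; linarith [Nat.le_ceil (4 * log (8 / ε) / ε ^ 2)]
  have hsparse : ∀ v, (#{X ∈ (univ : Finset V).powersetCard m |
      (#(G.neighborFinset v ∩ X) : ℝ) < (c + ε / 2) * m} : ℝ) ≤
        n.choose m * exp (-2 * (ε / 2) ^ 2 * m) := fun v => by
    simpa using card_filter_card_inter_lt_le (subset_univ (G.neighborFinset v)) (half_pos hε).le
      (by simpa [add_assoc] using hδ.trans (by exact_mod_cast G.minDegree_le_degree v)) m
  have hA : ({X | #X = m} : Finset (Finset V)) = univ.powersetCard m := by ext; simp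
  simp only [SimpleGraph.ncard_neighborSet_inter]
  simp only [Set.ncard_eq_toFinset_card', Set.toFinset_ofPred]
  rw [← filter_filter, hA]
  refine (half_card_lt_card_filter_card_filter_le _ _ (by positivity) hsparse ?_).trans_eq'
    (by simp [n])
  calc (n : ℝ) * (n.choose m * exp (-2 * (ε / 2) ^ 2 * m)) < n * (n.choose m * (ε / 8)) := by
        gcongr
    _ = #((univ : Finset V).powersetCard m) / 2 * (ε * n / 4) := by simp; ring

/-- For `r ≥ 3`, `ε > 0` and `m = ⌈4 ln(8/ε)/ε²⌉ + 1`, in every graph on `n ≥ m` vertices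
with minimum degree at least `((2r-5)/(2r-3)+ε)·n`, more than half of all `m`-element
vertex subsets `X` satisfy `|U_X| ≤ εn/4`, where
`U_X = {v : |N(v) ∩ X| < ((2r-5)/(2r-3)+ε/2)·m}`. -/
theorem majority_of_sets_good (r : ℕ) (hr : 3 ≤ r) (ε : ℝ) (hε : 0 < ε)
    (m : ℕ) (hm : m = ⌈4 * Real.log (8 / ε) / ε ^ 2⌉₊ + 1)
    (V : Type) [Fintype V] (hn : m ≤ Fintype.card V)
    (G : SimpleGraph V) [DecidableRel G.Adj]
    (hδ : ((2 * (r : ℝ) - 5) / (2 * (r : ℝ) - 3) + ε) * Fintype.card V ≤ G.minDegree) :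
    (((Fintype.card V).choose m : ℝ) / 2) <
      (({X : Finset V | X.card = m ∧
        (({v : V | ((G.neighborSet v ∩ ↑X).ncard : ℝ) <
            ((2 * (r : ℝ) - 5) / (2 * (r : ℝ) - 3) + ε / 2) * m}.ncard : ℝ)
          ≤ ε * Fintype.card V / 4)} : Set (Finset V)).ncard : ℝ) :=
  majority_of_sets_good_general r ε hε m hm V hn G hδ
end
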